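/- Let G be a connected bipartite simple graph on n ≥ 5 vertices. Then the distance spectral radius of G satisfies ρ(G) ≥ (3n − 4)/2, and in particular ρ(G) > n + 3 − 14/n. -/

import Mathlib

open Finset SimpleGraph

noncomputable section

/-- The Wiener index of a graph `G`: the sum of graph distances over all unordered pairs
of distinct vertices, i.e. half the sum over ordered pairs. -/
def wienerIndex {V : Type*} [Fintype V] (G : SimpleGraph V) : ℝ :=
  (∑ u : V, ∑ v : V, (G.dist u v : ℝ)) / 2

open Classical in
/-- The Harary index of a graph `G`: the sum of reciprocals of graph distances over all
unordered pairs of distinct vertices, where pairs in different components contribute `0`. -/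
def hararyIndex {V : Type*} [Fintype V] (G : SimpleGraph V) : ℝ :=
  (∑ u : V, ∑ v : V, if u ≠ v ∧ G.Reachable u v then ((G.dist u v : ℝ))⁻¹ else 0) / 2

/-- The distance matrix of a graph. -/
def distMatrix {V : Type*} [Fintype V] (G : SimpleGraph V) : Matrix V V ℝ :=
  fun u v => (G.dist u v : ℝ)

open Classical in
/-- The Harary (reciprocal distance) matrix of a graph. -/
def hararyMatrix {V : Type*} [Fintype V] (G : SimpleGraph V) : Matrix V V ℝ :=
  fun u v => if u ≠ v ∧ G.Reachable u v then ((G.dist u v : ℝ))⁻¹ else 0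

/-- The distance spectral radius: the largest eigenvalue of the distance matrix. -/
def distSpectralRadius {V : Type*} [Fintype V] [DecidableEq V] (G : SimpleGraph V) : ℝ :=
  sSup (spectrum ℝ (distMatrix G))

/-- The Harary spectral radius: the largest eigenvalue of the Harary matrix. -/
def hararySpectralRadius {V : Type*} [Fintype V] [DecidableEq V] (G : SimpleGraph V) : ℝ :=
  sSup (spectrum ℝ (hararyMatrix G))

/-- A graph on `n` vertices is pancyclic if it contains a cycle of every length `ℓ`
with `3 ≤ ℓ ≤ n`. -/
def Pancyclic {V : Type*} [Fintype V] (G : SimpleGraph V) : Prop :=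
  ∀ ℓ : ℕ, 3 ≤ ℓ → ℓ ≤ Fintype.card V → ∃ (v : V) (c : G.Walk v v), c.IsCycle ∧ c.length = ℓ

/-- A graph is bipartite iff it is 2-colorable. -/
def IsBipartite {V : Type*} (G : SimpleGraph V) : Prop := G.Colorable 2

/-- A graph is a complete bipartite graph if it is isomorphic to some `K_{a,b}`. -/
def IsCompleteBipartite {V : Type*} (G : SimpleGraph V) : Prop :=
  ∃ a b : ℕ, Nonempty (G ≃g completeBipartiteGraph (Fin a) (Fin b))

/-- The join `G ∨ H` of two graphs: take disjoint copies of `G` and `H` and add all edges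
between them. -/
def graphJoin {α β : Type*} (G : SimpleGraph α) (H : SimpleGraph β) : SimpleGraph (α ⊕ β) where
  Adj u v := match u, v with
    | Sum.inl u, Sum.inl v => G.Adj u v
    | Sum.inr u, Sum.inr v => H.Adj u v
    | Sum.inl _, Sum.inr _ => True
    | Sum.inr _, Sum.inl _ => True
  symm := ⟨fun u v => match u, v with
    | Sum.inl u, Sum.inl v => G.adj_symm
    | Sum.inr u, Sum.inr v => H.adj_symm
    | Sum.inl _, Sum.inr _ | Sum.inr _, Sum.inl _ => fun _ => trivial⟩
  loopless := ⟨fun u => by cases u <;> simp⟩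

/-- The family 𝒩𝒫 of exceptional graphs (on `n = Fintype.card V` vertices for the first one). -/
def InNPFamily {V : Type*} [Fintype V] (G : SimpleGraph V) : Prop :=
  Nonempty (G ≃g graphJoin (⊤ : SimpleGraph (Fin 2))
      ((⊤ : SimpleGraph (Fin (Fintype.card V - 4))) ⊕g (⊥ : SimpleGraph (Fin 2)))) ∨
  Nonempty (G ≃g graphJoin (⊤ : SimpleGraph (Fin 5)) (⊥ : SimpleGraph (Fin 6))) ∨
  Nonempty (G ≃g graphJoin (⊤ : SimpleGraph (Fin 3))
      ((⊤ : SimpleGraph (Fin 2)) ⊕g (⊥ : SimpleGraph (Fin 3)))) ∨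
  Nonempty (G ≃g graphJoin (⊤ : SimpleGraph (Fin 3))
      (completeBipartiteGraph (Fin 1) (Fin 4) ⊕g (⊥ : SimpleGraph (Fin 1)))) ∨
  Nonempty (G ≃g graphJoin (⊤ : SimpleGraph (Fin 3))
      (completeBipartiteGraph (Fin 1) (Fin 3) ⊕g (⊤ : SimpleGraph (Fin 2)))) ∨
  Nonempty (G ≃g graphJoin (graphJoin (⊤ : SimpleGraph (Fin 2)) (⊥ : SimpleGraph (Fin 2)))
      (⊥ : SimpleGraph (Fin 5))) ∨
  Nonempty (G ≃g graphJoin (⊤ : SimpleGraph (Fin 4)) (⊥ : SimpleGraph (Fin 5))) ∨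
  Nonempty (G ≃g graphJoin (completeBipartiteGraph (Fin 1) (Fin 2)) (⊥ : SimpleGraph (Fin 4))) ∨
  Nonempty (G ≃g graphJoin (⊤ : SimpleGraph (Fin 2))
      (completeBipartiteGraph (Fin 1) (Fin 3) ⊕g (⊥ : SimpleGraph (Fin 1)))) ∨
  Nonempty (G ≃g graphJoin (⊤ : SimpleGraph (Fin 3)) (⊥ : SimpleGraph (Fin 4)))

/-!
Testing the Rayleigh quotient of `D(G)` on the all-ones vector gives `ρ(G) · n ≥ 2 W(G)`.
In a connected graph with a proper `k`-colouring, distinct vertices are at distance at least `1`,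
and at least `2` when they have the same colour; by Cauchy–Schwarz at least `n² / k` ordered
pairs `(u, v)` have the same colour, so `2 W(G) ≥ n² - 2n + n² / k`. For `k = 2` this is
`ρ(G) ≥ (3n - 4) / 2`, and `(3n - 4) / 2 - (n + 3 - 14 / n) = ((n - 5)² + 3) / (2n) > 0`.
-/

namespace Matrix.IsHermitian

open Matrix Unitary

variable {n : Type*} [Fintype n] [DecidableEq n] {A : Matrix n n ℝ}

theorem posSemidef_smul_one_sub (hA : A.IsHermitian) {c : ℝ} (hc : ∀ i, hA.eigenvalues i ≤ c) :
    (c • 1 - A).PosSemidef := by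
  have hconj : c • 1 - A = conjStarAlgAut ℝ _ hA.eigenvectorUnitary
      (diagonal fun i => c - hA.eigenvalues i) := by
    conv_lhs => rw [hA.spectral_theorem]
    rw [← map_one (conjStarAlgAut ℝ _ hA.eigenvectorUnitary), ← map_smul, ← map_sub]
    congr 1
    ext i j
    by_cases h : i = j <;> simp [h, diagonal]
  rw [hconj, conjStarAlgAut_apply, Unitary.isUnit_coe.posSemidef_star_right_conjugate_iff]
  exact posSemidef_diagonal_iff.mpr fun i => sub_nonneg.mpr (hc i)

theorem dotProduct_mulVec_le_sSup_spectrum_mul (hA : A.IsHermitian) (x : n → ℝ) :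
    x ⬝ᵥ (A *ᵥ x) ≤ sSup (spectrum ℝ A) * (x ⬝ᵥ x) := by
  have hle : ∀ i, hA.eigenvalues i ≤ sSup (spectrum ℝ A) := fun i =>
    le_csSup A.finite_real_spectrum.bddAbove (hA.eigenvalues_mem_spectrum_real i)
  have := (hA.posSemidef_smul_one_sub hle).dotProduct_mulVec_nonneg x
  rw [sub_mulVec, smul_mulVec, one_mulVec, dotProduct_sub, dotProduct_smul, smul_eq_mul] at this
  simpa [sub_nonneg] using this

end Matrix.IsHermitian

theorem Fintype.card_sq_le_card_mul_sum_card_filter_eq {V α : Type*} [Fintype V] [Fintype α]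
    [DecidableEq α] (c : V → α) :
    Fintype.card V ^ 2 ≤ Fintype.card α * ∑ u, #{v | c v = c u} := by
  have hfib : ∑ u, #{v | c v = c u} = ∑ i, #{v | c v = i} ^ 2 := by
    rw [← Finset.sum_fiberwise univ c fun u => #{v | c v = c u}]
    refine Finset.sum_congr rfl fun i _ => ?_
    rw [Finset.sum_congr rfl fun u hu => by rw [(mem_filter.mp hu).2], sum_const, sq,
      smul_eq_mul]
  have hcard : Fintype.card V = ∑ i, #{v | c v = i} :=
    card_eq_sum_card_fiberwise fun v _ => mem_univ (c v)
  rw [hfib, hcard]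
  exact sq_sum_le_card_mul_sum_sq

namespace SimpleGraph

variable {V : Type*} {G : SimpleGraph V}

theorem Coloring.two_le_dist {α : Type*} (c : G.Coloring α) {u v : V} (hr : G.Reachable u v)
    (hne : u ≠ v) (hc : c u = c v) : 2 ≤ G.dist u v := by
  have h1 : G.dist u v ≠ 1 := fun h => c.valid (dist_eq_one_iff_adj.mp h) hc
  have h0 : G.dist u v ≠ 0 := fun h => hne (hr.dist_eq_zero_iff.mp h)
  omega

variable [Fintype V]

theorem distMatrix_isHermitian (G : SimpleGraph V) : (distMatrix G).IsHermitian := by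
  ext u v
  simp [distMatrix, dist_comm]

theorem two_mul_wienerIndex_le [DecidableEq V] (G : SimpleGraph V) :
    2 * wienerIndex G ≤ distSpectralRadius G * Fintype.card V := by
  have h := (distMatrix_isHermitian G).dotProduct_mulVec_le_sSup_spectrum_mul fun _ => 1
  simp only [dotProduct, Matrix.mulVec, distMatrix, mul_one, one_mul, sum_const, card_univ,
    nsmul_eq_mul] at h
  rw [wienerIndex, mul_div_cancel₀ _ two_ne_zero]
  exact h

theorem Connected.card_sq_sub_add_sum_card_filter_le (hG : G.Connected)
    {α : Type*} [DecidableEq α] (c : G.Coloring α) :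
    (Fintype.card V : ℝ) ^ 2 - 2 * Fintype.card V + ∑ u, (#{v | c v = c u} : ℝ) ≤
      2 * wienerIndex G := by
  classical
  have hpair : ∀ u v, 1 + (if c v = c u then 1 else 0) - (if u = v then 2 else 0) ≤
      (G.dist u v : ℝ) := by
    intro u v
    by_cases huv : u = v
    · norm_num [huv]
    · by_cases hc : c v = c u
      · have h2 := c.two_le_dist (hG u v) huv hc.symm
        norm_num [huv, hc]; exact_mod_cast h2
      · have h1 : 1 ≤ G.dist u v := hG.pos_dist_of_ne huv
        simpa [huv, hc] using h1
  calc (Fintype.card V : ℝ) ^ 2 - 2 * Fintype.card V + ∑ u, (#{v | c v = c u} : ℝ)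
      = ∑ u, ∑ v, (1 + (if c v = c u then 1 else 0) - (if u = v then (2 : ℝ) else 0)) := by
        simp [sum_add_distrib, sum_sub_distrib, sum_boole]
        ring
    _ ≤ ∑ u, ∑ v, (G.dist u v : ℝ) := by gcongr with u _ v _; exact hpair u v
    _ = 2 * wienerIndex G := by rw [wienerIndex]; ring

theorem Connected.le_distSpectralRadius_of_colorable [DecidableEq V] (hG : G.Connected) {k : ℕ}
    (hk : G.Colorable k) :
    (Fintype.card V : ℝ) - 2 + Fintype.card V / k ≤ distSpectralRadius G := by
  obtain ⟨c⟩ := hk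
  obtain ⟨v₀⟩ := hG.nonempty
  have hn : (0 : ℝ) < Fintype.card V := by exact_mod_cast Fintype.card_pos_iff.mpr ⟨v₀⟩
  have hk : (0 : ℝ) < k := by exact_mod_cast (c v₀).pos
  have hfib : (Fintype.card V : ℝ) ^ 2 ≤ k * ∑ u, (#{v | c v = c u} : ℝ) := by
    exact_mod_cast (Fintype.card_fin k) ▸ Fintype.card_sq_le_card_mul_sum_card_filter_eq c
  rw [← mul_le_mul_iff_of_pos_right hn]
  calc ((Fintype.card V : ℝ) - 2 + Fintype.card V / k) * Fintype.card V
      = Fintype.card V ^ 2 - 2 * Fintype.card V + Fintype.card V ^ 2 / k := by field_simp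
    _ ≤ Fintype.card V ^ 2 - 2 * Fintype.card V + ∑ u, (#{v | c v = c u} : ℝ) := by
      gcongr; rwa [div_le_iff₀' hk]
    _ ≤ 2 * wienerIndex G := hG.card_sq_sub_add_sum_card_filter_le c
    _ ≤ distSpectralRadius G * Fintype.card V := two_mul_wienerIndex_le G

end SimpleGraph

theorem distSpectralRadius_of_bipartite_general {V : Type*} [Fintype V] [DecidableEq V]
    (G : SimpleGraph V) (n : ℕ) (hn : Fintype.card V = n)
    (hconn : G.Connected) (hbip : _root_.IsBipartite G) :
    distSpectralRadius G ≥ (3 * (n : ℝ) - 4) / 2 ∧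
      distSpectralRadius G > (n : ℝ) + 3 - 14 / n := by
  have hρ := hconn.le_distSpectralRadius_of_colorable hbip
  have hn0 : (0 : ℝ) < n := by
    have := hconn.nonempty; exact_mod_cast hn ▸ Fintype.card_pos
  rw [hn] at hρ
  push_cast at hρ
  have hlt : (n : ℝ) + 3 - 14 / n < (3 * n - 4) / 2 := by
    rw [← sub_pos]
    have : (3 * (n : ℝ) - 4) / 2 - (n + 3 - 14 / n) = ((n - 5) ^ 2 + 3) / (2 * n) := by
      field_simp; ring
    rw [this]; positivity
  constructor <;> linarith

/-- For a connected bipartite graph on `n ≥ 5` vertices,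
`ρ(G) ≥ (3n − 4)/2`, and in particular `ρ(G) > n + 3 − 14/n`. -/
theorem distSpectralRadius_of_bipartite {V : Type*} [Fintype V] [DecidableEq V]
    (G : SimpleGraph V) (n : ℕ) (hn : Fintype.card V = n) (h5 : 5 ≤ n)
    (hconn : G.Connected) (hbip : _root_.IsBipartite G) :
    distSpectralRadius G ≥ (3 * (n : ℝ) - 4) / 2 ∧
      distSpectralRadius G > (n : ℝ) + 3 - 14 / n :=
  distSpectralRadius_of_bipartite_general G n hn hconn hbip
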